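/- arXiv:1709.00061 — 5 statements merged into one kernel-verified Lean document; each statement's English description precedes it below -/
import Mathlib

section
/- For any a ∈ ℝⁿ and b ∈ ℝ, the integral of x ↦ Φ(⟨a,x⟩ + b) with respect to the standard Gaussian measure γₙ on ℝⁿ equals Φ(b/√(1+‖a‖²)). -/
open MeasureTheory Real
open scoped RealInnerProductSpace

noncomputable def stdGaussian (n : ℕ) : Measure (EuclideanSpace ℝ (Fin n)) :=
  volume.withDensity fun x =>
    ENNReal.ofReal (Real.exp (-‖x‖ ^ 2 / 2) / (2 * Real.pi) ^ ((n : ℝ) / 2))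

noncomputable def Phi (x : ℝ) : ℝ :=
  ∫ y in Set.Iic x, Real.exp (-y ^ 2 / 2) / Real.sqrt (2 * Real.pi)

/-!
`Φ` is the distribution function of `N(0, 1)`, and `γₙ` is the standard Gaussian measure of
Mathlib, as both have characteristic function `exp (-‖t‖² / 2)`. Under `γₙ` the functional
`⟪a, ·⟫` has law `N(0, ‖a‖²)`, so the integral is `P(Z + Y ≤ b)` for independent
`Z ∼ N(0, 1)` and `Y ∼ N(0, ‖a‖²)` (using the symmetry of `Y`), i.e. the distribution function
of `N(0, 1) ∗ N(0, ‖a‖²) = N(0, 1 + ‖a‖²)` at `b`; rescaling gives `Φ (b / √(1 + ‖a‖²))`.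
-/

open ProbabilityTheory Set Module
open scoped NNReal

section StdGaussian

variable (E : Type*) [NormedAddCommGroup E] [InnerProductSpace ℝ E]

noncomputable def stdGaussianPDFReal (x : E) : ℝ :=
  exp (-‖x‖ ^ 2 / 2) / (2 * π) ^ ((finrank ℝ E : ℝ) / 2)

variable {E}

lemma stdGaussianPDFReal_nonneg (x : E) : 0 ≤ stdGaussianPDFReal E x := by
  unfold stdGaussianPDFReal; positivity

variable [FiniteDimensional ℝ E] [MeasurableSpace E] [BorelSpace E]

lemma integrable_stdGaussianPDFReal : Integrable (stdGaussianPDFReal E) := by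
  have h := (GaussianFourier.integrable_cexp_neg_mul_sq_norm_add (V := E) (b := 1 / 2)
    (by norm_num) 0 0).norm
  refine (h.congr (ae_of_all _ fun x => ?_)).div_const _
  dsimp only
  rw [show -(1 / 2) * (‖x‖ : ℂ) ^ 2 + 0 * ⟪(0 : E), x⟫ = ((-‖x‖ ^ 2 / 2 : ℝ) : ℂ) by
    push_cast; ring, Complex.norm_exp_ofReal]

lemma charFun_withDensity_stdGaussianPDFReal (t : E) :
    charFun (volume.withDensity fun x => ENNReal.ofReal (stdGaussianPDFReal E x)) t =
      Complex.exp (-‖t‖ ^ 2 / 2) := by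
  set c : ℝ := (2 * π) ^ ((finrank ℝ E : ℝ) / 2)
  have hc : (c : ℂ) ≠ 0 := Complex.ofReal_ne_zero.2 (by positivity)
  have hintegrand : ∀ x : E, (ENNReal.ofReal (stdGaussianPDFReal E x)).toReal
      • Complex.exp (⟪x, t⟫ * Complex.I) =
        (c : ℂ)⁻¹ * Complex.exp (-(1 / 2) * ‖x‖ ^ 2 + Complex.I * ⟪t, x⟫) := by
    intro x
    rw [ENNReal.toReal_ofReal (stdGaussianPDFReal_nonneg x), Complex.real_smul, real_inner_comm,
      stdGaussianPDFReal]
    push_cast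
    rw [div_eq_mul_inv, mul_comm (Complex.exp _), mul_assoc, ← Complex.exp_add]
    congr 2
    ring
  have hpow : ((π : ℂ) / (1 / 2)) ^ ((finrank ℝ E : ℂ) / 2) = c := by
    rw [Complex.ofReal_cpow (by positivity)]
    push_cast
    ring_nf
  rw [charFun_apply, integral_withDensity_eq_integral_toReal_smul
    (by unfold stdGaussianPDFReal; fun_prop)
    (ae_of_all _ fun _ => ENNReal.ofReal_lt_top)]
  simp_rw [hintegrand]
  rw [integral_const_mul, GaussianFourier.integral_cexp_neg_mul_sq_norm_add (by norm_num), hpow,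
    ← mul_assoc, inv_mul_cancel₀ hc, one_mul, Complex.I_sq]
  congr 1
  ring

lemma withDensity_stdGaussianPDFReal :
    volume.withDensity (fun x => ENNReal.ofReal (stdGaussianPDFReal E x)) =
      ProbabilityTheory.stdGaussian E := by
  have : IsFiniteMeasure (volume.withDensity fun x => ENNReal.ofReal (stdGaussianPDFReal E x)) :=
    isFiniteMeasure_withDensity_ofReal integrable_stdGaussianPDFReal.hasFiniteIntegral
  refine Measure.ext_of_charFun (funext fun t => ?_)
  rw [charFun_withDensity_stdGaussianPDFReal, charFun_stdGaussian]

lemma map_inner_stdGaussian (a : E) :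
    (ProbabilityTheory.stdGaussian E).map (fun x => ⟪a, x⟫) = gaussianReal 0 (‖a‖₊ ^ 2) := by
  have h := IsGaussian.map_eq_gaussianReal (μ := ProbabilityTheory.stdGaussian E) (innerSL ℝ a)
  simp only [integral_strongDual_stdGaussian, variance_dual_stdGaussian, innerSL_apply_norm] at h
  convert h using 2 <;> ext <;> simp

end StdGaussian

lemma MeasureTheory.Measure.conv_apply_Iic (μ ν : Measure ℝ) [SFinite μ] [SFinite ν] (b : ℝ) :
    (μ ∗ ν) (Iic b) = ∫⁻ y, μ (Iic (b - y)) ∂ν := by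
  rw [Measure.conv, Measure.map_apply measurable_add measurableSet_Iic,
    Measure.prod_apply_symm (measurable_add measurableSet_Iic)]
  congr with y
  congr 1
  ext x
  simp [le_sub_iff_add_le]

namespace ProbabilityTheory

lemma cdf_conv (μ ν : Measure ℝ) [IsProbabilityMeasure μ] [IsProbabilityMeasure ν] (b : ℝ) :
    cdf (μ ∗ ν) b = ∫ y, cdf μ (b - y) ∂ν := by
  have hanti : Antitone fun y => μ (Iic (b - y)) :=
    fun y z hyz => measure_mono (Iic_subset_Iic.2 (by linarith))
  simp_rw [cdf_eq_real, measureReal_def, Measure.conv_apply_Iic]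
  rw [integral_toReal hanti.measurable.aemeasurable (ae_of_all _ fun y => measure_lt_top _ _)]

lemma integral_cdf_add_gaussianReal (μ : Measure ℝ) [IsProbabilityMeasure μ] (v : ℝ≥0) (b : ℝ) :
    ∫ t, cdf μ (t + b) ∂gaussianReal 0 v = cdf (μ ∗ gaussianReal 0 v) b := by
  have hsymm : (gaussianReal 0 v).map (fun x => -x) = gaussianReal 0 v := by
    simpa using gaussianReal_map_neg (μ := 0) (v := v)
  have hmeas : Measurable fun y => cdf μ (b - y) :=
    (cdf μ).mono.measurable.comp (measurable_const.sub measurable_id)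
  conv_rhs => rw [cdf_conv, ← hsymm, integral_map (by fun_prop) hmeas.aestronglyMeasurable]
  simp_rw [sub_neg_eq_add, add_comm]

lemma cdf_gaussianReal_zero_eq_div_sqrt (v : ℝ≥0) (hv : v ≠ 0) (b : ℝ) :
    cdf (gaussianReal 0 v) b = cdf (gaussianReal 0 1) (b / √v) := by
  have hsqrt : 0 < √(v : ℝ) := by positivity
  have hmap : (gaussianReal 0 1).map (√(v : ℝ) * ·) = gaussianReal 0 v := by
    rw [gaussianReal_map_const_mul]
    congr 1
    · ring
    · ext; simp
  rw [cdf_eq_real, cdf_eq_real, ← hmap, map_measureReal_apply (by fun_prop) measurableSet_Iic]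
  congr 1
  ext x
  simp [le_div_iff₀ hsqrt, mul_comm]

end ProbabilityTheory

lemma Phi_eq_cdf_gaussianReal (x : ℝ) : Phi x = cdf (gaussianReal 0 1) x := by
  rw [cdf_eq_real, measureReal_def, gaussianReal_apply_eq_integral _ one_ne_zero,
    ENNReal.toReal_ofReal (setIntegral_nonneg measurableSet_Iic
      fun y _ => gaussianPDFReal_nonneg 0 1 y), Phi]
  congr with y
  simp [gaussianPDFReal_def, div_eq_inv_mul]

theorem stmt_0 (n : ℕ) (a : EuclideanSpace ℝ (Fin n)) (b : ℝ) :
    ∫ x, Phi (⟪a, x⟫ + b) ∂(stdGaussian n) = Phi (b / Real.sqrt (1 + ‖a‖ ^ 2)) := by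
  have hγ : stdGaussian n = ProbabilityTheory.stdGaussian (EuclideanSpace ℝ (Fin n)) := by
    rw [← withDensity_stdGaussianPDFReal, _root_.stdGaussian]
    simp only [stdGaussianPDFReal, finrank_euclideanSpace_fin]
  have hmeas : Measurable fun t => cdf (gaussianReal 0 1) (t + b) :=
    (cdf _).mono.measurable.comp (measurable_add_const b)
  simp_rw [Phi_eq_cdf_gaussianReal]
  rw [hγ, ← integral_map (by fun_prop) hmeas.aestronglyMeasurable, map_inner_stdGaussian,
    integral_cdf_add_gaussianReal, gaussianReal_conv_gaussianReal, add_zero,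
    cdf_gaussianReal_zero_eq_div_sqrt _ (by positivity)]
  simp
end

section
/- For any bounded measurable f : ℝⁿ → ℝ and any t > 0, the function x ↦ Q_t f(x) = ∫ f(x + √t z) dγₙ(z) is real analytic on ℝⁿ. -/
open MeasureTheory Real

noncomputable def heat (n : ℕ) (t : ℝ) (f : EuclideanSpace ℝ (Fin n) → ℝ)
    (x : EuclideanSpace ℝ (Fin n)) : ℝ :=
  ∫ z, f (x + Real.sqrt t • z) ∂(stdGaussian n)

/-!
Translating the Gaussian density `φ` and completing the square turns `Q_t f (x)` into
`exp (-‖x‖² / 2t)` times the Laplace transform `u ↦ ∫ g y exp ⟪y, u⟫ dy` at `u = x / √t`,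
where `g y = φ y f (√t y)` has Gaussian decay. Expanding `exp ⟪y, u⟫` in its power series and
integrating term by term gives a power series for the Laplace transform at `0`, convergent on
the unit ball because `‖y‖ᵐ / m! ≤ exp ‖y‖` and `g y exp ‖y‖` is integrable. Multiplying `g` by
`exp ⟪y, x₀⟫` moves the expansion point to any `x₀`.
-/

theorem integrable_exp_neg_mul_sq_norm {V : Type*} [NormedAddCommGroup V] [InnerProductSpace ℝ V]
    [FiniteDimensional ℝ V] [MeasurableSpace V] [BorelSpace V] {b : ℝ} (hb : 0 < b) :
    Integrable (fun v : V => rexp (-b * ‖v‖ ^ 2)) := by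
  have h := (GaussianFourier.integrable_cexp_neg_mul_sq_norm_add (V := V) (b := b)
    (by simpa using hb) 0 0).norm
  refine h.congr (ae_of_all _ fun v => ?_)
  simp only [Complex.norm_exp, zero_mul, add_zero]
  norm_cast

theorem analyticAt_norm_sq {E : Type*} [NormedAddCommGroup E] [InnerProductSpace ℝ E] (x : E) :
    AnalyticAt ℝ (fun x : E => ‖x‖ ^ 2) x := by
  convert ((innerSL ℝ (E := E)).analyticAt_bilinear (x, x)).comp (f := fun y => (y, y))
    (analyticAt_id.prod analyticAt_id) using 2 with y
  rw [Function.comp_apply, innerSL_apply_apply, real_inner_self_eq_norm_sq]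

theorem aestronglyMeasurable_of_integrable_mul_exp {α : Type*} [TopologicalSpace α]
    [MeasurableSpace α] [OpensMeasurableSpace α] {μ : Measure α} {g h : α → ℝ}
    (hh : Continuous h) (hg : Integrable (fun y => g y * rexp (h y)) μ) :
    AEStronglyMeasurable g μ := by
  refine (hg.aestronglyMeasurable.mul (hh.neg.rexp.aestronglyMeasurable)).congr
    (ae_of_all _ fun y => ?_)
  simp [mul_assoc, ← Real.exp_add]

section Laplace

open NormedSpace

variable {E : Type*} [NormedAddCommGroup E] [InnerProductSpace ℝ E]

noncomputable def expInnerTerm (m : ℕ) (y : E) :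
    ContinuousMultilinearMap ℝ (fun _ : Fin m => E) ℝ :=
  (expSeries ℝ ℝ m).compContinuousLinearMap fun _ => innerSL ℝ y

theorem expInnerTerm_apply (m : ℕ) (y v : E) :
    expInnerTerm m y (fun _ => v) = expSeries ℝ ℝ m (fun _ => inner ℝ y v) := rfl

theorem hasSum_expInnerTerm (y v : E) :
    HasSum (fun m => expInnerTerm m y (fun _ => v)) (rexp (inner ℝ y v)) := by
  simpa [expInnerTerm_apply, Real.exp_eq_exp_ℝ] using expSeries_hasSum_exp (𝕂 := ℝ) (inner ℝ y v)

theorem norm_expInnerTerm_le (m : ℕ) (y : E) : ‖expInnerTerm m y‖ ≤ rexp ‖y‖ :=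
  calc ‖expInnerTerm m y‖ ≤ ‖expSeries ℝ ℝ m‖ * ∏ _ : Fin m, ‖innerSL ℝ y‖ :=
        ContinuousMultilinearMap.norm_compContinuousLinearMap_le _ _
    _ = ‖y‖ ^ m / m.factorial := by
        simp [expSeries_eq_ofScalars, div_eq_inv_mul]
    _ ≤ rexp ‖y‖ := Real.pow_div_factorial_le_exp _ (norm_nonneg y) m

theorem continuous_expInnerTerm (m : ℕ) : Continuous (expInnerTerm m : E → _) :=
  (ContinuousMultilinearMap.compContinuousLinearMapLRight (expSeries ℝ ℝ m)).coe_continuous.comp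
    (continuous_pi fun _ => (innerSL ℝ).continuous)

theorem norm_mul_expInnerTerm_apply_le (g : E → ℝ) (m : ℕ) (y v : E) :
    ‖g y * expInnerTerm m y (fun _ => v)‖ ≤ ‖g y * rexp ‖y‖‖ * ‖v‖ ^ m := by
  rw [norm_mul, norm_mul, Real.norm_of_nonneg (exp_pos _).le, mul_assoc]
  gcongr
  calc ‖expInnerTerm m y (fun _ => v)‖ ≤ ‖expInnerTerm m y‖ * ‖v‖ ^ m :=
        (expInnerTerm m y).le_opNorm_mul_pow_of_le (pi_norm_le_iff_of_nonneg (norm_nonneg v)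
          |>.2 fun _ => le_rfl)
    _ ≤ rexp ‖y‖ * ‖v‖ ^ m := by gcongr; exact norm_expInnerTerm_le m y

variable [MeasurableSpace E]

noncomputable def laplaceSeries (μ : Measure E) (g : E → ℝ) : FormalMultilinearSeries ℝ E ℝ :=
  fun m => ∫ y, g y • expInnerTerm m y ∂μ

variable {μ : Measure E} {g : E → ℝ}

theorem norm_laplaceSeries_le (hg : Integrable (fun y => g y * rexp ‖y‖) μ) (m : ℕ) :
    ‖laplaceSeries μ g m‖ ≤ ∫ y, ‖g y * rexp ‖y‖‖ ∂μ :=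
  norm_integral_le_of_norm_le hg.norm <| ae_of_all _ fun y => by
    rw [norm_smul, norm_mul, Real.norm_of_nonneg (exp_pos _).le]
    exact mul_le_mul_of_nonneg_left (norm_expInnerTerm_le m y) (norm_nonneg _)

variable [BorelSpace E] [SecondCountableTopology E]

theorem integrable_smul_expInnerTerm (hg : Integrable (fun y => g y * rexp ‖y‖) μ) (m : ℕ) :
    Integrable (fun y => g y • expInnerTerm m y) μ := by
  refine hg.norm.mono' ((aestronglyMeasurable_of_integrable_mul_exp continuous_norm hg).smul
    (continuous_expInnerTerm m).aestronglyMeasurable) (ae_of_all _ fun y => ?_)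
  rw [norm_smul, norm_mul, Real.norm_of_nonneg (exp_pos _).le]
  exact mul_le_mul_of_nonneg_left (norm_expInnerTerm_le m y) (norm_nonneg _)

theorem laplaceSeries_apply (hg : Integrable (fun y => g y * rexp ‖y‖) μ) (m : ℕ) (v : E) :
    laplaceSeries μ g m (fun _ => v) = ∫ y, g y * expInnerTerm m y (fun _ => v) ∂μ :=
  ContinuousMultilinearMap.integral_apply (integrable_smul_expInnerTerm hg m) _

theorem hasFPowerSeriesOnBall_integral_mul_exp_inner
    (hg : Integrable (fun y => g y * rexp ‖y‖) μ) :
    HasFPowerSeriesOnBall (fun x => ∫ y, g y * rexp (inner ℝ y x) ∂μ) (laplaceSeries μ g) 0 1 := by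
  set K := ∫ y, ‖g y * rexp ‖y‖‖ ∂μ
  refine ⟨(laplaceSeries μ g).le_radius_of_bound K fun m => by
      simpa only [NNReal.coe_one, one_pow, mul_one] using norm_laplaceSeries_le hg m,
    one_pos, fun {v} hv => ?_⟩
  have hv : ‖v‖ < 1 := by simpa [← ofReal_norm, ENNReal.ofReal_lt_one] using hv
  set F : ℕ → E → ℝ := fun m y => g y * expInnerTerm m y (fun _ => v)
  have hF : ∀ m, Integrable (F m) μ := fun m =>
    (ContinuousMultilinearMap.apply ℝ _ ℝ fun _ => v).integrable_comp
      (integrable_smul_expInnerTerm hg m)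
  have hF_norm : ∀ m, ∫ y, ‖F m y‖ ∂μ ≤ K * ‖v‖ ^ m := fun m => by
    rw [← integral_mul_const]
    exact integral_mono (hF m).norm (hg.norm.mul_const _) fun y =>
      norm_mul_expInnerTerm_apply_le g m y v
  have hsum := hasSum_integral_of_summable_integral_norm hF <|
    Summable.of_nonneg_of_le (fun m => integral_nonneg fun y => norm_nonneg _) hF_norm
      ((summable_geometric_of_lt_one (norm_nonneg v) hv).mul_left K)
  simp only [laplaceSeries_apply hg, zero_add]
  convert hsum using 3 with y
  exact ((hasSum_expInnerTerm y v).mul_left (g y)).tsum_eq.symm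

theorem analyticOnNhd_integral_mul_exp_inner
    (hg : ∀ r : ℝ, Integrable (fun y => g y * rexp (r * ‖y‖)) μ) :
    AnalyticOnNhd ℝ (fun x => ∫ y, g y * rexp (inner ℝ y x) ∂μ) Set.univ := by
  intro x₀ _
  set g' : E → ℝ := fun y => g y * rexp (inner ℝ y x₀)
  have hg' : Integrable (fun y => g' y * rexp ‖y‖) μ := by
    refine (hg (‖x₀‖ + 1)).norm.mono' (((aestronglyMeasurable_of_integrable_mul_exp
      (by fun_prop) (hg 0)).mul (by fun_prop)).mul (by fun_prop)) (ae_of_all _ fun y => ?_)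
    simp only [g', norm_mul, Real.norm_of_nonneg (exp_pos _).le, mul_assoc, ← Real.exp_add]
    gcongr
    linarith [real_inner_le_norm y x₀, mul_comm ‖y‖ ‖x₀‖]
  have h_shift : (fun x => ∫ y, g y * rexp (inner ℝ y x) ∂μ) =
      fun x => ∫ y, g' y * rexp (inner ℝ y (x - x₀)) ∂μ := by
    funext x
    simp only [g', mul_assoc, ← Real.exp_add, ← inner_add_right, add_sub_cancel]
  rw [h_shift]
  simpa using ((hasFPowerSeriesOnBall_integral_mul_exp_inner hg').comp_sub x₀).analyticAt

end Laplace

section Gaussian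

noncomputable def stdGaussianDensity (n : ℕ) (y : EuclideanSpace ℝ (Fin n)) : ℝ :=
  rexp (-‖y‖ ^ 2 / 2) / (2 * π) ^ ((n : ℝ) / 2)

variable {n : ℕ}

theorem stdGaussianDensity_nonneg (y : EuclideanSpace ℝ (Fin n)) :
    0 ≤ stdGaussianDensity n y := by
  unfold stdGaussianDensity; positivity

theorem integral_stdGaussian (h : EuclideanSpace ℝ (Fin n) → ℝ) :
    ∫ z, h z ∂stdGaussian n = ∫ z, stdGaussianDensity n z * h z := by
  rw [stdGaussian, integral_withDensity_eq_integral_toReal_smul (by fun_prop)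
    (ae_of_all _ fun _ => ENNReal.ofReal_lt_top)]
  congr 1 with z
  exact congrArg (· * h z) (ENNReal.toReal_ofReal (stdGaussianDensity_nonneg z))

theorem stdGaussianDensity_sub (y u : EuclideanSpace ℝ (Fin n)) :
    stdGaussianDensity n (y - u) =
      rexp (-‖u‖ ^ 2 / 2) * (stdGaussianDensity n y * rexp (inner ℝ y u)) := by
  simp only [stdGaussianDensity, norm_sub_sq_real]
  rw [show -(‖y‖ ^ 2 - 2 * inner ℝ y u + ‖u‖ ^ 2) / 2 =
    -‖u‖ ^ 2 / 2 + (-‖y‖ ^ 2 / 2 + inner ℝ y u) by ring, Real.exp_add, Real.exp_add]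
  ring

theorem integrable_stdGaussianDensity_mul_exp (r : ℝ) :
    Integrable (fun y => stdGaussianDensity n y * rexp (r * ‖y‖)) := by
  refine ((integrable_exp_neg_mul_sq_norm (by norm_num : (0 : ℝ) < 1 / 4)).const_mul
    (rexp (r ^ 2) / (2 * π) ^ ((n : ℝ) / 2))).mono' (by unfold stdGaussianDensity; fun_prop)
    (ae_of_all _ fun y => ?_)
  rw [Real.norm_of_nonneg (by positivity [stdGaussianDensity_nonneg y]), stdGaussianDensity,
    div_mul_eq_mul_div, div_mul_eq_mul_div, ← Real.exp_add, ← Real.exp_add]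
  refine div_le_div_of_nonneg_right (Real.exp_le_exp.2 ?_) (by positivity)
  nlinarith [sq_nonneg (r - ‖y‖ / 2)]

theorem heat_eq_exp_mul_integral {t : ℝ} (ht : 0 < t) (f : EuclideanSpace ℝ (Fin n) → ℝ)
    (x : EuclideanSpace ℝ (Fin n)) :
    heat n t f x = rexp (-‖(√t)⁻¹ • x‖ ^ 2 / 2) *
      ∫ y, stdGaussianDensity n y * f (√t • y) * rexp (inner ℝ y ((√t)⁻¹ • x)) := by
  have hx : ∀ y, x + √t • (y - (√t)⁻¹ • x) = √t • y := fun y => by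
    rw [smul_sub, smul_inv_smul₀ (Real.sqrt_pos.2 ht).ne', add_sub_cancel]
  rw [heat, integral_stdGaussian, ← integral_sub_right_eq_self _ ((√t)⁻¹ • x),
    ← integral_const_mul]
  simp only [hx, stdGaussianDensity_sub]
  congr 1 with y
  ring

end Gaussian

theorem stmt_5 (n : ℕ) (t : ℝ) (ht : 0 < t) (f : EuclideanSpace ℝ (Fin n) → ℝ)
    (hf : Measurable f) (hfb : ∃ C, ∀ x, |f x| ≤ C) :
    AnalyticOnNhd ℝ (heat n t f) Set.univ := by
  obtain ⟨C, hC⟩ := hfb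
  have hg : ∀ r : ℝ,
      Integrable (fun y => stdGaussianDensity n y * f (√t • y) * rexp (r * ‖y‖)) := fun r => by
    simpa only [Function.comp_apply, mul_right_comm] using
      (integrable_stdGaussianDensity_mul_exp r).mul_bdd
        (hf.comp (measurable_const_smul _)).aestronglyMeasurable
        (ae_of_all _ fun y => (hC _).trans_eq' (Real.norm_eq_abs _))
  have h_scale : AnalyticOnNhd ℝ (fun x : EuclideanSpace ℝ (Fin n) => (√t)⁻¹ • x) Set.univ :=
    fun x _ => analyticAt_const.smul (f := fun _ => (√t)⁻¹) analyticAt_id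
  rw [show heat n t f = _ from funext (heat_eq_exp_mul_integral ht f)]
  intro x _
  exact (((analyticAt_norm_sq _).comp (h_scale x trivial)).neg.div_const.rexp).mul
    ((analyticOnNhd_integral_mul_exp_inner hg _ trivial).comp (h_scale x trivial))
end

section
/- Let λᵢ > 0 and h, f₁, …, f_m : ℝⁿ → [0,1] be measurable functions satisfying Φ⁻¹(h(∑ᵢ λᵢxᵢ)) ≥ ∑ᵢ λᵢΦ⁻¹(fᵢ(xᵢ)) for a.e. (x₁,…,x_m), with at least one function a.e. equal to 0 or a.e. equal to 1. Then Φ⁻¹(∫h dγₙ) = ∑ᵢ λᵢΦ⁻¹(∫fᵢ dγₙ) holds if and only if either (h =a.e. 1, some fᵢ =a.e. 1, and no fᵢ =a.e. 0) or (h =a.e. 0 and some fᵢ =a.e. 0). -/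
open MeasureTheory Real

noncomputable def PhiInv : ℝ → ℝ := Function.invFun Phi

/-- The inverse Gaussian CDF, extended to take the value `⊥` at `0` (and below)
and `⊤` at `1` (and above). -/
noncomputable def PhiInvE (p : ℝ) : EReal :=
  if p ≤ 0 then ⊥ else if 1 ≤ p then ⊤ else ((PhiInv p : ℝ) : EReal)

/-!
Under the hypothesis one side of the equation is infinite, so only the infinite values matter.
Since `γₙ` and Lebesgue measure have the same null sets, `Φ⁻¹(∫ g dγₙ)` is `-∞` exactly when
`g = 0` a.e. and `+∞` exactly when `g = 1` a.e. With the convention `∞ - ∞ = -∞`, the weighted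
sum is `-∞` iff some term is, and `+∞` iff some term is `+∞` and none is `-∞`.
-/

namespace EReal

lemma add_eq_top_iff {x y : EReal} : x + y = ⊤ ↔ (x = ⊤ ∨ y = ⊤) ∧ x ≠ ⊥ ∧ y ≠ ⊥ := by
  induction x using EReal.rec <;> induction y using EReal.rec <;> simp [← EReal.coe_add]

variable {ι : Type*} {s : Finset ι} {a : ι → EReal}

lemma sum_eq_bot_iff : ∑ i ∈ s, a i = ⊥ ↔ ∃ i ∈ s, a i = ⊥ := by
  classical
  induction s using Finset.induction_on with
  | empty => simp
  | insert j s hj ih => simp [Finset.sum_insert hj, add_eq_bot_iff, ih]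

lemma sum_eq_top_iff : ∑ i ∈ s, a i = ⊤ ↔ (∃ i ∈ s, a i = ⊤) ∧ ∀ i ∈ s, a i ≠ ⊥ := by
  classical
  induction s using Finset.induction_on with
  | empty => simp
  | insert j s hj ih =>
    simp only [Finset.sum_insert hj, add_eq_top_iff, ih, ne_eq, sum_eq_bot_iff, not_exists,
      not_and, Finset.exists_mem_insert, Finset.forall_mem_insert]
    tauto

lemma eq_sum_iff_of_exists_infinite {x : EReal}
    (hinf : x = ⊥ ∨ x = ⊤ ∨ ∃ i ∈ s, a i = ⊥ ∨ a i = ⊤) :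
    x = ∑ i ∈ s, a i ↔
      (x = ⊤ ∧ (∃ i ∈ s, a i = ⊤) ∧ ∀ i ∈ s, a i ≠ ⊥) ∨ (x = ⊥ ∧ ∃ i ∈ s, a i = ⊥) := by
  by_cases hbot : ∃ i ∈ s, a i = ⊥
  · have hnot : ¬ ∀ i ∈ s, a i ≠ ⊥ := by simpa using hbot
    simp [sum_eq_bot_iff.2 hbot, hbot, hnot]
  · have hS : ∑ i ∈ s, a i ≠ ⊥ := sum_eq_bot_iff.not.2 hbot
    have hfin : ∀ i ∈ s, a i ≠ ⊥ := by simpa using hbot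
    simp only [hbot, iff_true_intro hfin, and_false, or_false, and_true]
    rcases hinf with rfl | rfl | ⟨i, hi, hai | hai⟩
    · simp [hS.symm]
    · rw [eq_comm, sum_eq_top_iff, and_iff_left hfin]
      simp
    · exact absurd hai (hfin i hi)
    · have hex : ∃ i ∈ s, a i = ⊤ := ⟨i, hi, hai⟩
      simp [sum_eq_top_iff.2 ⟨hex, hfin⟩, hex]

lemma coe_mul_eq_bot_iff_of_pos {c : ℝ} (hc : 0 < c) {z : EReal} :
    (c : EReal) * z = ⊥ ↔ z = ⊥ := by
  induction z using EReal.rec with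
  | bot => simp [coe_mul_bot_of_pos hc]
  | coe z => simp [← coe_mul]
  | top => simp [coe_mul_top_of_pos hc]

lemma coe_mul_eq_top_iff_of_pos {c : ℝ} (hc : 0 < c) {z : EReal} :
    (c : EReal) * z = ⊤ ↔ z = ⊤ := by
  induction z using EReal.rec with
  | bot => simp [coe_mul_bot_of_pos hc]
  | coe z => simp [← coe_mul]
  | top => simp [coe_mul_top_of_pos hc]

end EReal

lemma PhiInvE_eq_bot_iff {p : ℝ} (hp : 0 ≤ p) : PhiInvE p = ⊥ ↔ p = 0 := by
  unfold PhiInvE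
  split_ifs <;> simp <;> linarith

lemma PhiInvE_eq_top_iff {p : ℝ} (hp : p ≤ 1) : PhiInvE p = ⊤ ↔ p = 1 := by
  unfold PhiInvE
  split_ifs <;> simp <;> linarith

section ProbabilityMeasure

variable {α : Type*} [MeasurableSpace α] {μ : Measure α} {g : α → ℝ}

lemma integrable_of_mem_Icc [IsFiniteMeasure μ] (hg : Measurable g)
    (hg01 : ∀ x, g x ∈ Set.Icc (0 : ℝ) 1) : Integrable g μ :=
  .of_bound hg.aestronglyMeasurable 1 <| .of_forall fun x => by
    rw [Real.norm_of_nonneg (hg01 x).1]; exact (hg01 x).2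

variable [IsProbabilityMeasure μ]

lemma integral_mem_Icc_of_mem_Icc (hg : Measurable g) (hg01 : ∀ x, g x ∈ Set.Icc (0 : ℝ) 1) :
    ∫ x, g x ∂μ ∈ Set.Icc (0 : ℝ) 1 := by
  refine ⟨integral_nonneg fun x => (hg01 x).1, ?_⟩
  calc ∫ x, g x ∂μ ≤ ∫ _, (1 : ℝ) ∂μ :=
        integral_mono (integrable_of_mem_Icc hg hg01) (integrable_const 1) fun x => (hg01 x).2
    _ = 1 := by simp

lemma integral_eq_one_iff_of_le_one (hg : Integrable g μ) (hg1 : ∀ x, g x ≤ 1) :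
    ∫ x, g x ∂μ = 1 ↔ g =ᵐ[μ] fun _ => 1 := by
  have hzero := integral_eq_zero_iff_of_nonneg (fun x => sub_nonneg.2 (hg1 x))
    ((integrable_const (1 : ℝ)).sub hg)
  rw [integral_sub (integrable_const 1) hg, integral_const, probReal_univ, one_smul,
    sub_eq_zero, eq_comm] at hzero
  rw [hzero]
  exact Filter.eventually_congr (.of_forall fun x => sub_eq_zero.trans eq_comm)

lemma PhiInvE_integral_eq_bot_iff (hg : Measurable g) (hg01 : ∀ x, g x ∈ Set.Icc (0 : ℝ) 1) :
    PhiInvE (∫ x, g x ∂μ) = ⊥ ↔ g =ᵐ[μ] fun _ => 0 := by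
  rw [PhiInvE_eq_bot_iff (integral_mem_Icc_of_mem_Icc hg hg01).1]
  exact integral_eq_zero_iff_of_nonneg (fun x => (hg01 x).1) (integrable_of_mem_Icc hg hg01)

lemma PhiInvE_integral_eq_top_iff (hg : Measurable g) (hg01 : ∀ x, g x ∈ Set.Icc (0 : ℝ) 1) :
    PhiInvE (∫ x, g x ∂μ) = ⊤ ↔ g =ᵐ[μ] fun _ => 1 := by
  rw [PhiInvE_eq_top_iff (integral_mem_Icc_of_mem_Icc hg hg01).2]
  exact integral_eq_one_iff_of_le_one (integrable_of_mem_Icc hg hg01) fun x => (hg01 x).2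

end ProbabilityMeasure

lemma integral_exp_neg_sq_norm_div_two (n : ℕ) :
    ∫ x : EuclideanSpace ℝ (Fin n), exp (-‖x‖ ^ 2 / 2) = (2 * π) ^ ((n : ℝ) / 2) := by
  have h := GaussianFourier.integral_rexp_neg_mul_sq_norm
    (V := EuclideanSpace ℝ (Fin n)) (b := 1 / 2) (by norm_num)
  rw [finrank_euclideanSpace_fin, div_div_eq_mul_div, div_one, mul_comm] at h
  simpa only [neg_mul, one_div, ← div_eq_inv_mul, neg_div] using h

lemma stdGaussian_density_pos (n : ℕ) (x : EuclideanSpace ℝ (Fin n)) :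
    0 < exp (-‖x‖ ^ 2 / 2) / (2 * π) ^ ((n : ℝ) / 2) := by
  positivity

instance isProbabilityMeasure_stdGaussian (n : ℕ) : IsProbabilityMeasure (stdGaussian n) := by
  have hint :
      ∫ x : EuclideanSpace ℝ (Fin n), exp (-‖x‖ ^ 2 / 2) / (2 * π) ^ ((n : ℝ) / 2) = 1 := by
    rw [integral_div, integral_exp_neg_sq_norm_div_two, div_self (by positivity)]
  constructor
  rw [stdGaussian, withDensity_apply _ MeasurableSet.univ, Measure.restrict_univ,
    ← ofReal_integral_eq_lintegral_ofReal (.of_integral_ne_zero (by simp [hint]))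
      (.of_forall fun x => (stdGaussian_density_pos n x).le), hint, ENNReal.ofReal_one]

lemma ae_stdGaussian (n : ℕ) : ae (stdGaussian n) = ae volume := by
  refine le_antisymm (Measure.ae_le_iff_absolutelyContinuous.2 <|
    withDensity_absolutelyContinuous _ _) (Measure.ae_le_iff_absolutelyContinuous.2 ?_)
  refine withDensity_absolutelyContinuous' (by fun_prop) (.of_forall fun x => ?_)
  simpa using stdGaussian_density_pos n x

theorem stmt_11_general (n m : ℕ) (lam : Fin m → ℝ) (hlam : ∀ i, 0 < lam i)
    (h : EuclideanSpace ℝ (Fin n) → ℝ) (f : Fin m → EuclideanSpace ℝ (Fin n) → ℝ)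
    (hh : Measurable h) (hf : ∀ i, Measurable (f i))
    (hh01 : ∀ x, h x ∈ Set.Icc (0 : ℝ) 1) (hf01 : ∀ i x, f i x ∈ Set.Icc (0 : ℝ) 1)
    (htriv : (h =ᵐ[(volume : Measure (EuclideanSpace ℝ (Fin n)))] fun _ => (0 : ℝ)) ∨
      (h =ᵐ[(volume : Measure (EuclideanSpace ℝ (Fin n)))] fun _ => (1 : ℝ)) ∨
      ∃ i, (f i =ᵐ[(volume : Measure (EuclideanSpace ℝ (Fin n)))] fun _ => (0 : ℝ)) ∨
        (f i =ᵐ[(volume : Measure (EuclideanSpace ℝ (Fin n)))] fun _ => (1 : ℝ))) :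
    (PhiInvE (∫ x, h x ∂(stdGaussian n)) =
        ∑ i, ((lam i : ℝ) : EReal) * PhiInvE (∫ x, f i x ∂(stdGaussian n))) ↔
      (((h =ᵐ[(volume : Measure (EuclideanSpace ℝ (Fin n)))] fun _ => (1 : ℝ)) ∧
          (∃ i, f i =ᵐ[(volume : Measure (EuclideanSpace ℝ (Fin n)))] fun _ => (1 : ℝ)) ∧
          (∀ i, ¬ (f i =ᵐ[(volume : Measure (EuclideanSpace ℝ (Fin n)))] fun _ => (0 : ℝ)))) ∨
        ((h =ᵐ[(volume : Measure (EuclideanSpace ℝ (Fin n)))] fun _ => (0 : ℝ)) ∧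
          ∃ i, f i =ᵐ[(volume : Measure (EuclideanSpace ℝ (Fin n)))] fun _ => (0 : ℝ))) := by
  rw [← ae_stdGaussian] at htriv ⊢
  have hbot i : ((lam i : ℝ) : EReal) * PhiInvE (∫ x, f i x ∂stdGaussian n) = ⊥ ↔
      f i =ᵐ[stdGaussian n] fun _ => 0 :=
    (EReal.coe_mul_eq_bot_iff_of_pos (hlam i)).trans (PhiInvE_integral_eq_bot_iff (hf i) (hf01 i))
  have htop i : ((lam i : ℝ) : EReal) * PhiInvE (∫ x, f i x ∂stdGaussian n) = ⊤ ↔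
      f i =ᵐ[stdGaussian n] fun _ => 1 :=
    (EReal.coe_mul_eq_top_iff_of_pos (hlam i)).trans (PhiInvE_integral_eq_top_iff (hf i) (hf01 i))
  have key := EReal.eq_sum_iff_of_exists_infinite (x := PhiInvE (∫ x, h x ∂stdGaussian n))
    (s := Finset.univ) (a := fun i => ((lam i : ℝ) : EReal) * PhiInvE (∫ x, f i x ∂stdGaussian n))
  simp only [Finset.mem_univ, true_and, forall_const, ne_eq, hbot, htop,
    PhiInvE_integral_eq_bot_iff hh hh01, PhiInvE_integral_eq_top_iff hh hh01] at key
  exact key htriv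

theorem stmt_11 (n m : ℕ) (lam : Fin m → ℝ) (hlam : ∀ i, 0 < lam i)
    (h : EuclideanSpace ℝ (Fin n) → ℝ) (f : Fin m → EuclideanSpace ℝ (Fin n) → ℝ)
    (hh : Measurable h) (hf : ∀ i, Measurable (f i))
    (hh01 : ∀ x, h x ∈ Set.Icc (0 : ℝ) 1) (hf01 : ∀ i x, f i x ∈ Set.Icc (0 : ℝ) 1)
    (hineq : ∀ᵐ x : Fin m → EuclideanSpace ℝ (Fin n) ∂(Measure.pi fun _ => volume),
      (∑ i, ((lam i : ℝ) : EReal) * PhiInvE (f i (x i))) ≤ PhiInvE (h (∑ i, lam i • x i)))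
    (htriv : (h =ᵐ[(volume : Measure (EuclideanSpace ℝ (Fin n)))] fun _ => (0 : ℝ)) ∨
      (h =ᵐ[(volume : Measure (EuclideanSpace ℝ (Fin n)))] fun _ => (1 : ℝ)) ∨
      ∃ i, (f i =ᵐ[(volume : Measure (EuclideanSpace ℝ (Fin n)))] fun _ => (0 : ℝ)) ∨
        (f i =ᵐ[(volume : Measure (EuclideanSpace ℝ (Fin n)))] fun _ => (1 : ℝ))) :
    (PhiInvE (∫ x, h x ∂(stdGaussian n)) =
        ∑ i, ((lam i : ℝ) : EReal) * PhiInvE (∫ x, f i x ∂(stdGaussian n))) ↔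
      (((h =ᵐ[(volume : Measure (EuclideanSpace ℝ (Fin n)))] fun _ => (1 : ℝ)) ∧
          (∃ i, f i =ᵐ[(volume : Measure (EuclideanSpace ℝ (Fin n)))] fun _ => (1 : ℝ)) ∧
          (∀ i, ¬ (f i =ᵐ[(volume : Measure (EuclideanSpace ℝ (Fin n)))] fun _ => (0 : ℝ)))) ∨
        ((h =ᵐ[(volume : Measure (EuclideanSpace ℝ (Fin n)))] fun _ => (0 : ℝ)) ∧
          ∃ i, f i =ᵐ[(volume : Measure (EuclideanSpace ℝ (Fin n)))] fun _ => (0 : ℝ))) :=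
  stmt_11_general n m lam hlam h f hh hf hh01 hf01 htriv
end

section
/- Let K be a convex subset of ℝⁿ such that the complement Kᶜ also differs from a convex set by a Lebesgue-null set. Then either K or Kᶜ is a null set or there exist a ∈ ℝⁿ, b ∈ ℝ with 1_K(x) = 1_{⟨a,x⟩+b ≥ 0} for Lebesgue-a.e. x. -/
open MeasureTheory
open scoped RealInnerProductSpace symmDiff

theorem stmt_17 (n : ℕ) (K : Set (EuclideanSpace ℝ (Fin n))) (hK : Convex ℝ K)
    (hKc : ∃ K' : Set (EuclideanSpace ℝ (Fin n)), Convex ℝ K' ∧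
      (volume : Measure (EuclideanSpace ℝ (Fin n))) (Kᶜ ∆ K') = 0) :
    (volume : Measure (EuclideanSpace ℝ (Fin n))) K = 0 ∨
    (volume : Measure (EuclideanSpace ℝ (Fin n))) Kᶜ = 0 ∨
    ∃ (a : EuclideanSpace ℝ (Fin n)) (b : ℝ),
      ∀ᵐ x ∂(volume : Measure (EuclideanSpace ℝ (Fin n))), (x ∈ K ↔ 0 ≤ ⟪a, x⟫ + b) := by
  obtain ⟨K', hK', hnull⟩ := hKc
  by_cases h0 : volume K = 0
  · exact Or.inl h0
  by_cases h1 : volume Kᶜ = 0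
  · exact Or.inr (Or.inl h1)
  refine Or.inr (Or.inr ?_)
  -- K ∩ K' is a null set
  have hKK' : volume (K ∩ K') = 0 := by
    refine measure_mono_null (fun x hx => ?_) hnull
    exact Or.inr ⟨hx.2, fun h => h hx.1⟩
  -- complement of K ∪ K' is null
  have hcover : volume ((K ∪ K')ᶜ) = 0 := by
    refine measure_mono_null (fun x hx => ?_) hnull
    rw [Set.mem_compl_iff, Set.mem_union] at hx
    push_neg at hx
    exact Or.inl ⟨hx.1, hx.2⟩
  -- frontiers are null
  have hfK : volume (frontier K) = 0 := hK.addHaar_frontier volume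
  have hfK' : volume (frontier K') = 0 := hK'.addHaar_frontier volume
  -- interiors are nonempty
  have hiK : (interior K).Nonempty := by
    by_contra h
    rw [Set.not_nonempty_iff_eq_empty] at h
    apply h0
    refine measure_mono_null (fun x hx => ?_) hfK
    have : x ∈ closure K := subset_closure hx
    rw [frontier, h, Set.diff_empty]; exact this
  have hiK' : (interior K').Nonempty := by
    by_contra h
    rw [Set.not_nonempty_iff_eq_empty] at h
    have hK'0 : volume K' = 0 := by
      refine measure_mono_null (fun x hx => ?_) hfK'
      have : x ∈ closure K' := subset_closure hx
      rw [frontier, h, Set.diff_empty]; exact this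
    apply h1
    have : Kᶜ ⊆ (Kᶜ ∆ K') ∪ K' := by
      intro x hx
      by_cases hx' : x ∈ K'
      · exact Or.inr hx'
      · exact Or.inl (Or.inl ⟨hx, hx'⟩)
    exact measure_mono_null this (measure_union_null hnull hK'0)
  -- interiors are disjoint
  have hdisj : Disjoint (interior K) (interior K') := by
    rw [Set.disjoint_iff_inter_eq_empty]
    by_contra h
    rw [← Ne, Set.nonempty_iff_ne_empty.symm] at h
    have hopen : IsOpen (interior K ∩ interior K') := isOpen_interior.inter isOpen_interior
    have : volume (interior K ∩ interior K') = 0 :=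
      measure_mono_null (Set.inter_subset_inter interior_subset interior_subset) hKK'
    exact (hopen.measure_pos volume h).ne' this
  obtain ⟨f, u, hfu1, hfu2⟩ := geometric_hahn_banach_open_open hK.interior isOpen_interior
    hK'.interior isOpen_interior hdisj
  -- Riesz representation of -f
  obtain ⟨a, ha⟩ : ∃ a : EuclideanSpace ℝ (Fin n), ∀ x : EuclideanSpace ℝ (Fin n), ⟪a, x⟫ = -(f x) :=
    ⟨(InnerProductSpace.toDual ℝ (EuclideanSpace ℝ (Fin n))).symm (-f), fun x => by
      simp [InnerProductSpace.toDual_symm_apply]⟩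
  refine ⟨a, u, ?_⟩
  have h1 : ∀ᵐ x : EuclideanSpace ℝ (Fin n) ∂volume, x ∈ K ∪ K' := by
    rw [ae_iff]; exact measure_mono_null (fun x hx => by simpa using hx) hcover
  have h2 : ∀ᵐ x : EuclideanSpace ℝ (Fin n) ∂volume, x ∉ K ∩ K' := by
    rw [ae_iff]; exact measure_mono_null (fun x hx => by simpa using hx) hKK'
  have h3 : ∀ᵐ x : EuclideanSpace ℝ (Fin n) ∂volume, x ∉ frontier K := by
    rw [ae_iff]; exact measure_mono_null (fun x hx => by simpa using hx) hfK
  have h4 : ∀ᵐ x : EuclideanSpace ℝ (Fin n) ∂volume, x ∉ frontier K' := by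
    rw [ae_iff]; exact measure_mono_null (fun x hx => by simpa using hx) hfK'
  filter_upwards [h1, h2, h3, h4] with x hx1 hx2 hx3 hx4
  rw [ha x]
  constructor
  · intro hxK
    have hxint : x ∈ interior K := by
      rcases (closure_eq_interior_union_frontier K ▸ subset_closure hxK) with h | h
      · exact h
      · exact absurd h hx3
    have := hfu1 x hxint
    linarith
  · intro hle
    by_contra hxK
    have hxK' : x ∈ K' := hx1.resolve_left hxK
    have hxint : x ∈ interior K' := by
      rcases (closure_eq_interior_union_frontier K' ▸ subset_closure hxK') with h | h
      · exact h
      · exact absurd h hx4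
    have := hfu2 x hxint
    linarith
end

section
/- Let V : ℝⁿ → ℝ̄ be measurable such that both V and x ↦ −V(−x) are a.e. equal to concave functions. Then either V(x) = ⟨a,x⟩ + b a.e. for some a, b, or V(x) = Φ⁻¹(1_{⟨a,x⟩+b ≥ 0}(x)) a.e. (i.e., V is a.e. equal to +∞ on a half-space and −∞ on its complement). -/
open MeasureTheory
open scoped RealInnerProductSpace

/-- `EReal`-valued concavity. -/
def ConcaveE {n : ℕ} (W : EuclideanSpace ℝ (Fin n) → EReal) : Prop :=
  ∀ x y : EuclideanSpace ℝ (Fin n), ∀ α : ℝ, 0 ≤ α → α ≤ 1 →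
    ((α : ℝ) : EReal) * W x + ((1 - α : ℝ) : EReal) * W y ≤ W (α • x + (1 - α) • y)

/-!
Let `W` and `G` be concave representatives of `V` and of `x ↦ -V (-x)`; after reflecting `G`,
`W = -G` a.e. If `W` is finite on a set of positive measure, neither `W` nor `G` takes the value
`⊤`: the finite points of `W` would lie on the null frontier of the convex set `{W = ⊤}`. Hence
`W ≠ ⊥` a.e., and the convex conull set `{W ≠ ⊥}` is the whole space. So `W` is a real concave
function a.e. equal to the convex function `-G`; both are continuous, so they coincide and `W` is
affine. Otherwise `W ∈ {⊤, ⊥}` a.e., the convex sets `{W = ⊤}` and `{G = ⊤}` partition the space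
up to a null set, and a hyperplane separating their interiors bounds the required half-space.
-/

open Set

section Convex

variable {E : Type*} [NormedAddCommGroup E] [NormedSpace ℝ E] [FiniteDimensional ℝ E]
  [MeasurableSpace E] [BorelSpace E] (μ : Measure E) [μ.IsAddHaarMeasure] {s t : Set E}

theorem Convex.eq_univ_of_measure_compl_eq_zero (hs : Convex ℝ s) (h : μ sᶜ = 0) :
    s = univ := by
  have hint : interior s =ᵐ[μ] univ :=
    (interior_ae_eq_of_null_frontier (hs.addHaar_frontier μ)).trans (ae_eq_univ.2 h)
  obtain ⟨y, hy⟩ : (interior s).Nonempty := by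
    rw [nonempty_iff_ne_empty]
    rintro hempty
    rw [hempty, ae_eq_univ, compl_empty] at hint
    exact isOpen_univ.measure_ne_zero μ univ_nonempty hint
  have hclosure : closure s = univ :=
    (isClosed_closure.ae_eq_univ_iff_eq (μ := μ)).1 <|
      ae_eq_univ.2 (measure_mono_null (compl_subset_compl.2 subset_closure) h)
  refine eq_univ_of_forall fun x => interior_subset ?_
  -- `x` is the midpoint of the interior point `y` and of `2 • x - y ∈ closure s`.
  have hmid := hs.combo_interior_closure_mem_interior hy (hclosure ▸ mem_univ ((2 : ℝ) • x - y))
    (by norm_num : (0 : ℝ) < 1 / 2) (by norm_num : (0 : ℝ) ≤ 1 / 2) (by norm_num)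
  convert hmid using 1
  module

/-- Up to null sets a convex set is its interior, since its frontier is null; the interiors of
`s` and `t` are then disjoint, and Hahn–Banach separates them. -/
theorem Convex.exists_ae_mem_iff_lt (hs : Convex ℝ s) (ht : Convex ℝ t)
    (hst : ∀ᵐ x ∂μ, x ∈ s ↔ x ∉ t) :
    ∃ (f : StrongDual ℝ E) (u : ℝ), ∀ᵐ x ∂μ, x ∈ s ↔ f x < u := by
  have hs' := Filter.eventuallyEq_set.1 (interior_ae_eq_of_null_frontier (hs.addHaar_frontier μ))
  have ht' := Filter.eventuallyEq_set.1 (interior_ae_eq_of_null_frontier (ht.addHaar_frontier μ))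
  have hdisj : Disjoint (interior s) (interior t) := by
    rw [disjoint_iff_inter_eq_empty]
    refine (isOpen_interior.inter isOpen_interior).eq_empty_of_measure_zero (μ := μ) ?_
    rw [measure_eq_zero_iff_ae_notMem]
    filter_upwards [hst, hs', ht'] with x hx hxs hxt
    rw [mem_inter_iff, hxs, hxt]
    tauto
  obtain ⟨f, u, hfs, hft⟩ := geometric_hahn_banach_open_open hs.interior isOpen_interior
    ht.interior isOpen_interior hdisj
  refine ⟨f, u, ?_⟩
  filter_upwards [hst, hs', ht'] with x hx hxs hxt
  refine ⟨fun h => hfs x (hxs.2 h), fun hlt => ?_⟩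
  by_contra h
  exact (hft x (hxt.2 (by tauto))).not_gt hlt

end Convex

theorem ConvexOn.exists_eq_inner_add_of_concaveOn {E : Type*} [NormedAddCommGroup E]
    [InnerProductSpace ℝ E] [FiniteDimensional ℝ E] {f : E → ℝ}
    (hconv : ConvexOn ℝ univ f) (hconc : ConcaveOn ℝ univ f) :
    ∃ (a : E) (b : ℝ), ∀ x, f x = ⟪a, x⟫ + b := by
  have hmid : ∀ x y, f (midpoint ℝ x y) = midpoint ℝ (f x) (f y) := by
    intro x y
    have hhalf : (0 : ℝ) ≤ ⅟2 := by norm_num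
    have hsum : (⅟2 : ℝ) + ⅟2 = 1 := by norm_num
    simp only [midpoint_eq_smul_add, smul_add]
    exact le_antisymm (hconv.2 (mem_univ x) (mem_univ y) hhalf hhalf hsum)
      (hconc.2 (mem_univ x) (mem_univ y) hhalf hhalf hsum)
  have hcont : Continuous f := continuousOn_univ.1 (hconv.continuousOn isOpen_univ)
  set A := AffineMap.ofMapMidpoint f hmid hcont
  refine ⟨(InnerProductSpace.toDual ℝ E).symm (LinearMap.toContinuousLinearMap A.linear), A 0,
    fun x => ?_⟩
  rw [InnerProductSpace.toDual_symm_apply, LinearMap.coe_toContinuousLinearMap']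
  exact congrFun A.decomp x

theorem EReal.coe_mul_ne_bot {a : ℝ} (ha : 0 < a) {X : EReal} (hX : X ≠ ⊥) : (a : EReal) * X ≠ ⊥ :=
  (EReal.mul_ne_bot _ _).2
    ⟨Or.inl (EReal.coe_ne_bot a), Or.inr hX, Or.inl (EReal.coe_ne_top a),
      Or.inl (EReal.coe_nonneg.2 ha.le)⟩

namespace ConcaveE

variable {n : ℕ} {W G : EuclideanSpace ℝ (Fin n) → EReal}

theorem comp_neg (hW : ConcaveE W) : ConcaveE fun x => W (-x) := by
  intro x y α hα hα₁
  simpa only [smul_neg, neg_add] using hW (-x) (-y) α hα hα₁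

theorem exists_combo_le (hW : ConcaveE W) {x y z : EuclideanSpace ℝ (Fin n)}
    (hz : z ∈ openSegment ℝ x y) :
    ∃ a b : ℝ, 0 < a ∧ 0 < b ∧ (a : EReal) * W x + (b : EReal) * W y ≤ W z := by
  obtain ⟨a, b, ha, hb, hab, rfl⟩ := hz
  obtain rfl : b = 1 - a := by linarith
  exact ⟨a, 1 - a, ha, hb, hW x y a ha.le (by linarith)⟩

theorem convex_setOf_ne_bot (hW : ConcaveE W) : Convex ℝ {x | W x ≠ ⊥} :=
  convex_iff_openSegment_subset.2 fun x hx y hy z hz => by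
    obtain ⟨a, b, ha, hb, hle⟩ := hW.exists_combo_le hz
    exact ne_bot_of_le_ne_bot
      (EReal.add_ne_bot_iff.2 ⟨EReal.coe_mul_ne_bot ha hx, EReal.coe_mul_ne_bot hb hy⟩) hle

theorem eq_top_of_mem_openSegment (hW : ConcaveE W) {x y z : EuclideanSpace ℝ (Fin n)}
    (hx : W x = ⊤) (hy : W y ≠ ⊥) (hz : z ∈ openSegment ℝ x y) : W z = ⊤ := by
  obtain ⟨a, b, ha, hb, hle⟩ := hW.exists_combo_le hz
  rwa [hx, EReal.coe_mul_top_of_pos ha, EReal.top_add_of_ne_bot (EReal.coe_mul_ne_bot hb hy),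
    top_le_iff] at hle

theorem convex_setOf_eq_top (hW : ConcaveE W) : Convex ℝ {x | W x = ⊤} :=
  convex_iff_openSegment_subset.2 fun _ hx y hy _ hz =>
    hW.eq_top_of_mem_openSegment hx (by simp_all) hz

/-- Concavity spreads the value `⊤` from one point over every segment towards a point where `W` is
not `⊥`, so the finite values of `W` lie on the frontier of the convex set `{W = ⊤}`. -/
theorem ne_top_of_volume_ne_zero (hW : ConcaveE W)
    (h : volume {x | W x ≠ ⊥ ∧ W x ≠ ⊤} ≠ 0) (x₀ : EuclideanSpace ℝ (Fin n)) : W x₀ ≠ ⊤ := by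
  intro hx₀
  have hsub : {x | W x ≠ ⊥ ∧ W x ≠ ⊤} ⊆ frontier {x | W x = ⊤} := by
    rintro y ⟨hy_bot, hy_top⟩
    refine ⟨?_, fun hint => hy_top (interior_subset (s := {x | W x = ⊤}) hint)⟩
    exact closure_mono (fun z hz => hW.eq_top_of_mem_openSegment hx₀ hy_bot hz)
      (segment_subset_closure_openSegment (right_mem_segment ℝ x₀ y))
  exact h (measure_mono_null hsub (hW.convex_setOf_eq_top.addHaar_frontier volume))

theorem concaveOn_of_coe {w : EuclideanSpace ℝ (Fin n) → ℝ} (hw : ConcaveE fun x => (w x : EReal)) :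
    ConcaveOn ℝ univ w := by
  refine ⟨convex_univ, fun x _ y _ a b ha _ hab => ?_⟩
  obtain rfl : b = 1 - a := by linarith
  have hcombo := hw x y a ha (by linarith)
  simp only [smul_eq_mul] at hcombo ⊢
  exact_mod_cast hcombo

theorem volume_finite_eq_of_ae_eq_neg (hWG : W =ᵐ[volume] -G) :
    volume {x | G x ≠ ⊥ ∧ G x ≠ ⊤} = volume {x | W x ≠ ⊥ ∧ W x ≠ ⊤} := by
  refine measure_congr (Filter.eventuallyEq_set.2 ?_)
  filter_upwards [hWG] with x hx
  simp only [hx, Pi.neg_apply, ne_eq, EReal.neg_eq_bot_iff, EReal.neg_eq_top_iff]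
  tauto

theorem finite_of_ae_eq_neg (hW : ConcaveE W) (hG : ConcaveE G) (hWG : W =ᵐ[volume] -G)
    (h : volume {x | W x ≠ ⊥ ∧ W x ≠ ⊤} ≠ 0) (x : EuclideanSpace ℝ (Fin n)) :
    W x ≠ ⊥ ∧ W x ≠ ⊤ := by
  have hG_ne_top := hG.ne_top_of_volume_ne_zero (volume_finite_eq_of_ae_eq_neg hWG ▸ h)
  have hW_ne_bot : {x | W x ≠ ⊥} = univ := by
    refine hW.convex_setOf_ne_bot.eq_univ_of_measure_compl_eq_zero volume ?_
    rw [measure_eq_zero_iff_ae_notMem]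
    filter_upwards [hWG] with y hy
    simpa [hy] using hG_ne_top y
  exact ⟨eq_univ_iff_forall.1 hW_ne_bot x, hW.ne_top_of_volume_ne_zero h x⟩

theorem exists_eq_inner_add_of_ae_eq_neg (hW : ConcaveE W) (hG : ConcaveE G)
    (hWG : W =ᵐ[volume] -G) (h : volume {x | W x ≠ ⊥ ∧ W x ≠ ⊤} ≠ 0) :
    ∃ (a : EuclideanSpace ℝ (Fin n)) (b : ℝ), ∀ x, W x = ((⟪a, x⟫ + b : ℝ) : EReal) := by
  have hGW : G =ᵐ[volume] -W := by
    filter_upwards [hWG] with x hx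
    simp [hx]
  have hWfin := hW.finite_of_ae_eq_neg hG hWG h
  have hGfin := hG.finite_of_ae_eq_neg hW hGW (volume_finite_eq_of_ae_eq_neg hWG ▸ h)
  set w := fun x => (W x).toReal
  set g := fun x => (G x).toReal
  have hWw : W = fun x => (w x : EReal) :=
    funext fun x => (EReal.coe_toReal (hWfin x).2 (hWfin x).1).symm
  have hGg : G = fun x => (g x : EReal) :=
    funext fun x => (EReal.coe_toReal (hGfin x).2 (hGfin x).1).symm
  have hw := concaveOn_of_coe (hWw ▸ hW)
  have hg := concaveOn_of_coe (hGg ▸ hG)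
  have hwg : w = -g := by
    refine (continuousOn_univ.1 (hw.continuousOn isOpen_univ)).ae_eq_iff_eq volume
      (continuousOn_univ.1 (hg.neg.continuousOn isOpen_univ)) |>.1 ?_
    filter_upwards [hWG] with x hx
    rw [hWw, hGg] at hx
    simp only [Pi.neg_apply] at hx ⊢
    exact_mod_cast hx
  obtain ⟨a, b, hab⟩ := ConvexOn.exists_eq_inner_add_of_concaveOn (hwg ▸ hg.neg) hw
  exact ⟨a, b, fun x => by rw [hWw]; exact congrArg _ (hab x)⟩

theorem exists_halfspace_of_ae_eq_neg (hW : ConcaveE W) (hG : ConcaveE G)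
    (hWG : W =ᵐ[volume] -G) (h : volume {x | W x ≠ ⊥ ∧ W x ≠ ⊤} = 0) :
    ∃ (a : EuclideanSpace ℝ (Fin n)) (b : ℝ),
      ∀ᵐ x, W x = if 0 ≤ ⟪a, x⟫ + b then (⊤ : EReal) else ⊥ := by
  have hinf : ∀ᵐ x, W x = ⊤ ∨ W x = ⊥ := by
    filter_upwards [measure_eq_zero_iff_ae_notMem.1 h] with x hx
    simp only [not_and_or, not_not] at hx
    exact hx.symm
  have hpart : ∀ᵐ x, x ∈ {x | G x = ⊤} ↔ x ∉ {x | W x = ⊤} := by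
    filter_upwards [hinf, hWG] with x hx hx'
    show G x = ⊤ ↔ ¬W x = ⊤
    rw [hx', Pi.neg_apply, EReal.neg_eq_top_iff] at hx ⊢
    rw [EReal.neg_eq_bot_iff] at hx
    rcases hx with hx | hx <;> simp [hx]
  obtain ⟨f, u, hfu⟩ :=
    hG.convex_setOf_eq_top.exists_ae_mem_iff_lt volume hW.convex_setOf_eq_top hpart
  refine ⟨(InnerProductSpace.toDual ℝ _).symm f, -u, ?_⟩
  filter_upwards [hfu, hpart, hinf] with x hfx hx hx_inf
  rw [InnerProductSpace.toDual_symm_apply]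
  split_ifs with hle
  · exact not_not.1 (hx.not.1 (fun hlt => (hfx.1 hlt).not_ge (by linarith)))
  · exact hx_inf.resolve_left (hx.1 (hfx.2 (by linarith)))

end ConcaveE

theorem stmt_18_general (n : ℕ) (V : EuclideanSpace ℝ (Fin n) → EReal)
    (h1 : ∃ W : EuclideanSpace ℝ (Fin n) → EReal, ConcaveE W ∧
      V =ᵐ[(volume : Measure (EuclideanSpace ℝ (Fin n)))] W)
    (h2 : ∃ W : EuclideanSpace ℝ (Fin n) → EReal, ConcaveE W ∧
      (fun x => -V (-x)) =ᵐ[(volume : Measure (EuclideanSpace ℝ (Fin n)))] W) :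
    (∃ (a : EuclideanSpace ℝ (Fin n)) (b : ℝ),
      ∀ᵐ x ∂(volume : Measure (EuclideanSpace ℝ (Fin n))),
        V x = ((⟪a, x⟫ + b : ℝ) : EReal)) ∨
    (∃ (a : EuclideanSpace ℝ (Fin n)) (b : ℝ),
      ∀ᵐ x ∂(volume : Measure (EuclideanSpace ℝ (Fin n))),
        V x = if 0 ≤ ⟪a, x⟫ + b then (⊤ : EReal) else ⊥) := by
  obtain ⟨W, hW, hVW⟩ := h1
  obtain ⟨G, hG, hVG⟩ := h2
  have hWG : W =ᵐ[volume] -fun x => G (-x) := by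
    filter_upwards [hVW, (Measure.measurePreserving_neg volume).quasiMeasurePreserving.ae_eq hVG]
      with x hx hx'
    simp only [Function.comp_apply, neg_neg] at hx'
    simp [← hx, ← hx']
  by_cases h : volume {x | W x ≠ ⊥ ∧ W x ≠ ⊤} = 0
  · obtain ⟨a, b, hab⟩ := hW.exists_halfspace_of_ae_eq_neg hG.comp_neg hWG h
    exact Or.inr ⟨a, b, hVW.trans hab⟩
  · obtain ⟨a, b, hab⟩ := hW.exists_eq_inner_add_of_ae_eq_neg hG.comp_neg hWG h
    exact Or.inl ⟨a, b, hVW.mono fun x hx => hx.trans (hab x)⟩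

theorem stmt_18 (n : ℕ) (V : EuclideanSpace ℝ (Fin n) → EReal) (hV : Measurable V)
    (h1 : ∃ W : EuclideanSpace ℝ (Fin n) → EReal, ConcaveE W ∧
      V =ᵐ[(volume : Measure (EuclideanSpace ℝ (Fin n)))] W)
    (h2 : ∃ W : EuclideanSpace ℝ (Fin n) → EReal, ConcaveE W ∧
      (fun x => -V (-x)) =ᵐ[(volume : Measure (EuclideanSpace ℝ (Fin n)))] W) :
    (∃ (a : EuclideanSpace ℝ (Fin n)) (b : ℝ),
      ∀ᵐ x ∂(volume : Measure (EuclideanSpace ℝ (Fin n))),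
        V x = ((⟪a, x⟫ + b : ℝ) : EReal)) ∨
    (∃ (a : EuclideanSpace ℝ (Fin n)) (b : ℝ),
      ∀ᵐ x ∂(volume : Measure (EuclideanSpace ℝ (Fin n))),
        V x = if 0 ≤ ⟪a, x⟫ + b then (⊤ : EReal) else ⊥) :=
  stmt_18_general n V h1 h2
end
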